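/- arXiv:1109.3031 — 4 statements merged into one kernel-verified Lean document; each statement's English description precedes it below -/
import Mathlib

section
/- The metric space (UAdm, d) of uniform admissible subsets of D with the distance d(p,q) = 2^{-max{i | π_i(p)=π_i(q)}} (and 0 if p=q) is a complete metric space: every Cauchy sequence of uniform admissible subsets has a limit. -/
open OmegaCompletePartialOrder

/-- A subset of a pointed ω-cpo is uniform admissible w.r.t. projections `π`:
it contains `⊥`, is closed under lubs of ω-chains, and closed under all `π n`. -/
def UniformAdmissible {D : Type*} [OmegaCompletePartialOrder D] [OrderBot D]
    (π : ℕ → D → D) (p : Set D) : Prop :=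
  (⊥ : D) ∈ p ∧
  (∀ c : Chain D, (∀ k, c k ∈ p) → ωSup c ∈ p) ∧
  (∀ h ∈ p, ∀ n, π n h ∈ p)

/-- The set of indices on which the images of `p` and `q` under the projections agree. -/
def agreeSet {D : Type*} (π : ℕ → D → D) (p q : Set D) : Set ℕ :=
  {i | π i '' p = π i '' q}

open Classical in
/-- The distance `d(p,q) = 2^{-max{i | π_i(p)=π_i(q)}}` (and `0` if `p = q`). -/
noncomputable def uDist {D : Type*} (π : ℕ → D → D) (p q : Set D) : ℝ :=
  if p = q then 0 else (2 : ℝ) ^ (-((sSup (agreeSet π p q) : ℕ) : ℤ))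

/-!
The projections `π i` commute and are idempotent, so the `i`-th projection of a uniform
admissible set is again uniform admissible, and `agreeSet π p q` is downward closed. Hence a
Cauchy sequence `F` has, for every `i`, an eventually constant `i`-th projection `G i`, and
`L = {x | ∀ i, π i x ∈ G i}` is a uniform admissible set with `π i '' L = G i`. The distance is
`1` rather than `0` when `p ≠ q` agree at every projection; if this happens for infinitely many
`F n` against `L`, all these `F n` coincide by the Cauchy property and are the limit instead.
-/

section Projections

variable {D : Type*} {π : ℕ → D → D}

theorem proj_idem (hcomp : ∀ (n m : ℕ) (x : D), π n (π m x) = π (min n m) x) (n : ℕ) (x : D) :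
    π n (π n x) = π n x := by
  simpa using hcomp n n x

theorem proj_comm (hcomp : ∀ (n m : ℕ) (x : D), π n (π m x) = π (min n m) x) (n m : ℕ) (x : D) :
    π n (π m x) = π m (π n x) := by
  rw [hcomp, hcomp, min_comm]

theorem proj_bot [Bot D] (hcomp : ∀ (n m : ℕ) (x : D), π n (π m x) = π (min n m) x)
    (hbot : ∀ x : D, π 0 x = ⊥) (n : ℕ) : π n ⊥ = ⊥ := by
  simpa [hbot] using hcomp n 0 ⊥

theorem image_proj_image_proj (hcomp : ∀ (n m : ℕ) (x : D), π n (π m x) = π (min n m) x)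
    {i j : ℕ} (hij : i ≤ j) (s : Set D) : π i '' (π j '' s) = π i '' s := by
  simp only [Set.image_image, hcomp, min_eq_left hij]

theorem isLowerSet_agreeSet (hcomp : ∀ (n m : ℕ) (x : D), π n (π m x) = π (min n m) x)
    (p q : Set D) : IsLowerSet (agreeSet π p q) := by
  intro j i hij (h : π j '' p = π j '' q)
  show π i '' p = π i '' q
  rw [← image_proj_image_proj hcomp hij, h, image_proj_image_proj hcomp hij]

end Projections

section UniformAdmissible

variable {D : Type*} [OmegaCompletePartialOrder D] [OrderBot D] {π : ℕ → D → D}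

theorem UniformAdmissible.image_proj (hmono : ∀ n, Monotone (π n))
    (hcont : ∀ (n : ℕ) (c : Chain D), π n (ωSup c) = ωSup (c.map ⟨π n, hmono n⟩))
    (hcomp : ∀ (n m : ℕ) (x : D), π n (π m x) = π (min n m) x)
    (hbot : ∀ x : D, π 0 x = ⊥) {p : Set D} (hp : UniformAdmissible π p) (i : ℕ) :
    UniformAdmissible π (π i '' p) := by
  obtain ⟨hp_bot, hp_sup, hp_proj⟩ := hp
  refine ⟨⟨⊥, hp_bot, proj_bot hcomp hbot i⟩, fun c hc => ?_, ?_⟩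
  · choose x hx hcx using hc
    have hc_mem : ∀ k, c k ∈ p := fun k => hcx k ▸ hp_proj _ (hx k) i
    have hc_fix : c.map ⟨π i, hmono i⟩ = c := by
      ext k
      simp only [Chain.coe_map, Function.comp_apply, OrderHom.coe_mk, ← hcx k, proj_idem hcomp]
    exact ⟨ωSup c, hp_sup c hc_mem, by rw [hcont, hc_fix]⟩
  · rintro _ ⟨x, hx, rfl⟩ n
    exact ⟨π n x, hp_proj x hx n, proj_comm hcomp i n x⟩

theorem uniformAdmissible_setOf_forall_proj_mem (hmono : ∀ n, Monotone (π n))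
    (hcont : ∀ (n : ℕ) (c : Chain D), π n (ωSup c) = ωSup (c.map ⟨π n, hmono n⟩))
    (hcomp : ∀ (n m : ℕ) (x : D), π n (π m x) = π (min n m) x)
    (hbot : ∀ x : D, π 0 x = ⊥) {G : ℕ → Set D} (hG : ∀ i, UniformAdmissible π (G i)) :
    UniformAdmissible π {x | ∀ i, π i x ∈ G i} := by
  refine ⟨fun i => ?_, fun c hc i => ?_, fun x hx n i => ?_⟩
  · rw [proj_bot hcomp hbot]
    exact (hG i).1
  · rw [hcont]
    exact (hG i).2.1 _ fun k => hc k i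
  · rw [proj_comm hcomp]
    exact (hG i).2.2 _ (hx i) n

theorem exists_uniformAdmissible_eventually_image_proj_eq (hmono : ∀ n, Monotone (π n))
    (hcont : ∀ (n : ℕ) (c : Chain D), π n (ωSup c) = ωSup (c.map ⟨π n, hmono n⟩))
    (hcomp : ∀ (n m : ℕ) (x : D), π n (π m x) = π (min n m) x)
    (hbot : ∀ x : D, π 0 x = ⊥) {F : ℕ → Set D} (hF : ∀ k, UniformAdmissible π (F k))
    (hstab : ∀ i, ∃ N, ∀ n ≥ N, π i '' F n = π i '' F N) :
    ∃ L, UniformAdmissible π L ∧ ∀ i, ∃ N, ∀ n ≥ N, π i '' F n = π i '' L := by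
  choose N hN using hstab
  set G : ℕ → Set D := fun i => π i '' F (N i)
  refine ⟨{x | ∀ i, π i x ∈ G i},
    uniformAdmissible_setOf_forall_proj_mem hmono hcont hcomp hbot
      fun i => (hF (N i)).image_proj hmono hcont hcomp hbot i,
    fun i => ⟨N i, fun n hn => ?_⟩⟩
  rw [hN i n hn]
  apply Set.Subset.antisymm
  · rintro _ ⟨z, hz, rfl⟩
    refine ⟨π i z, fun j => ?_, proj_idem hcomp i z⟩
    have hi : π i '' F (max (N i) (N j)) = G i := hN i _ (le_max_left _ _)
    have hj : π j '' F (max (N i) (N j)) = G j := hN j _ (le_max_right _ _)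
    obtain ⟨w, hw, hwz⟩ : π i z ∈ π i '' F (max (N i) (N j)) := hi ▸ ⟨z, hz, rfl⟩
    rw [← hj, ← hwz]
    exact ⟨π i w, (hF _).2.2 w hw i, rfl⟩
  · rintro _ ⟨x, hx, rfl⟩
    exact hx i

end UniformAdmissible

section Distance

variable {D : Type*} {π : ℕ → D → D}

theorem two_zpow_neg_natCast_lt {ε : ℝ} (hε : 0 < ε) : ∃ i : ℕ, (2 : ℝ) ^ (-(i : ℤ)) < ε := by
  obtain ⟨i, hi⟩ := exists_pow_lt_of_lt_one hε (by norm_num : (1 / 2 : ℝ) < 1)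
  exact ⟨i, by simpa [zpow_neg, inv_pow] using hi⟩

theorem mem_agreeSet_of_uDist_lt {p q : Set D} (hlow : IsLowerSet (agreeSet π p q)) {i : ℕ}
    (h : uDist π p q < 2 ^ (-(i : ℤ))) : i ∈ agreeSet π p q := by
  by_cases hpq : p = q
  · subst hpq
    exact rfl
  rw [uDist, if_neg hpq] at h
  set s := sSup (agreeSet π p q)
  have his : i < s := by
    have := (zpow_lt_zpow_iff_right₀ (one_lt_two : (1 : ℝ) < 2)).1 h
    omega
  -- `sSup` on `ℕ` is `0` for empty and for unbounded sets
  have hne : (agreeSet π p q).Nonempty := by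
    by_contra hempty
    rw [Set.not_nonempty_iff_eq_empty] at hempty
    simp only [s, hempty, csSup_empty] at his
    exact Nat.not_lt_zero i his
  have hbdd : BddAbove (agreeSet π p q) := by
    by_contra hunb
    simp only [s, Nat.sSup_of_not_bddAbove hunb] at his
    exact Nat.not_lt_zero i his
  exact hlow his.le (Nat.sSup_mem hne hbdd)

theorem uDist_le_of_mem_agreeSet {p q : Set D} (hlow : IsLowerSet (agreeSet π p q)) {i j : ℕ}
    (hj : j ∉ agreeSet π p q) (hi : i ∈ agreeSet π p q) : uDist π p q ≤ 2 ^ (-(i : ℤ)) := by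
  have hpq : p ≠ q := by
    rintro rfl
    exact hj rfl
  have hbdd : BddAbove (agreeSet π p q) :=
    ⟨j, fun a ha => le_of_not_ge fun hja => hj (hlow hja ha)⟩
  rw [uDist, if_neg hpq]
  apply zpow_le_zpow_right₀ one_le_two
  have := le_csSup hbdd hi
  omega

theorem uDist_eq_one_of_forall_image_proj_eq {p q : Set D} (hpq : p ≠ q)
    (h : ∀ i, π i '' p = π i '' q) : uDist π p q = 1 := by
  have hunb : ¬BddAbove (agreeSet π p q) := fun ⟨b, hb⟩ => by
    have := hb (h (b + 1))
    omega
  rw [uDist, if_neg hpq, Nat.sSup_of_not_bddAbove hunb]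
  norm_num

theorem eventually_image_proj_eq_of_cauchy
    (hcomp : ∀ (n m : ℕ) (x : D), π n (π m x) = π (min n m) x) {F : ℕ → Set D}
    (hC : ∀ ε : ℝ, 0 < ε → ∃ N, ∀ m ≥ N, ∀ n ≥ N, uDist π (F m) (F n) < ε) (i : ℕ) :
    ∃ N, ∀ n ≥ N, π i '' F n = π i '' F N := by
  obtain ⟨N, hN⟩ := hC (2 ^ (-(i : ℤ))) (by positivity)
  exact ⟨N, fun n hn => mem_agreeSet_of_uDist_lt (isLowerSet_agreeSet hcomp _ _)
    (hN n hn N le_rfl)⟩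

theorem uDist_tendsto_of_eventually_image_proj_eq
    (hcomp : ∀ (n m : ℕ) (x : D), π n (π m x) = π (min n m) x) {F : ℕ → Set D} {L : Set D}
    (hFL : ∀ i, ∃ N, ∀ n ≥ N, π i '' F n = π i '' L)
    (hsep : ∃ M, ∀ n ≥ M, F n ≠ L → ∃ j, π j '' F n ≠ π j '' L) :
    ∀ ε : ℝ, 0 < ε → ∃ N, ∀ n ≥ N, uDist π (F n) L < ε := by
  intro ε hε
  obtain ⟨M, hM⟩ := hsep
  obtain ⟨i, hi⟩ := two_zpow_neg_natCast_lt hε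
  obtain ⟨N, hN⟩ := hFL i
  refine ⟨max M N, fun n hn => ?_⟩
  by_cases hnL : F n = L
  · simpa [uDist, hnL] using hε
  obtain ⟨j, hj⟩ := hM n (le_of_max_le_left hn) hnL
  calc uDist π (F n) L ≤ 2 ^ (-(i : ℤ)) :=
        uDist_le_of_mem_agreeSet (isLowerSet_agreeSet hcomp _ _) hj (hN n (le_of_max_le_right hn))
    _ < ε := hi

theorem uDist_tendsto_of_frequently_eq {F : ℕ → Set D} {p : Set D}
    (hC : ∀ ε : ℝ, 0 < ε → ∃ N, ∀ m ≥ N, ∀ n ≥ N, uDist π (F m) (F n) < ε)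
    (hp : ∀ M, ∃ n ≥ M, F n = p) :
    ∀ ε : ℝ, 0 < ε → ∃ N, ∀ n ≥ N, uDist π (F n) p < ε := by
  intro ε hε
  obtain ⟨N, hN⟩ := hC ε hε
  obtain ⟨n₀, hn₀, rfl⟩ := hp N
  exact ⟨N, fun n hn => hN n hn n₀ hn₀⟩

end Distance

theorem uAdm_complete_general {D : Type*}
    [OmegaCompletePartialOrder D] [OrderBot D] (π : ℕ → D → D)
    (hmono : ∀ n, Monotone (π n))
    (hcont : ∀ (n : ℕ) (c : Chain D), π n (ωSup c) = ωSup (c.map ⟨π n, hmono n⟩))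
    (hcomp : ∀ (n m : ℕ) (x : D), π n (π m x) = π (min n m) x)
    (hbot : ∀ x : D, π 0 x = ⊥) :
    ∀ F : ℕ → Set D, (∀ k, UniformAdmissible π (F k)) →
      (∀ ε : ℝ, 0 < ε → ∃ N, ∀ m ≥ N, ∀ n ≥ N, uDist π (F m) (F n) < ε) →
      ∃ L : Set D, UniformAdmissible π L ∧
        ∀ ε : ℝ, 0 < ε → ∃ N, ∀ n ≥ N, uDist π (F n) L < ε := by
  intro F hF hC
  obtain ⟨L, hL, hFL⟩ := exists_uniformAdmissible_eventually_image_proj_eq hmono hcont hcomp hbot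
    hF (eventually_image_proj_eq_of_cauchy hcomp hC)
  by_cases hsep : ∃ M, ∀ n ≥ M, F n ≠ L → ∃ j, π j '' F n ≠ π j '' L
  · exact ⟨L, hL, uDist_tendsto_of_eventually_image_proj_eq hcomp hFL hsep⟩
  push Not at hsep
  obtain ⟨N, hN⟩ := hC 1 one_pos
  obtain ⟨n₀, hn₀, -, hn₀L⟩ := hsep N
  refine ⟨F n₀, hF n₀, uDist_tendsto_of_frequently_eq hC fun M => ?_⟩
  obtain ⟨n, hn, -, hnL⟩ := hsep (max M N)
  refine ⟨n, le_of_max_le_left hn, ?_⟩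
  by_contra hne
  have hone := uDist_eq_one_of_forall_image_proj_eq hne fun j => (hnL j).trans (hn₀L j).symm
  linarith [hN n (le_of_max_le_right hn) n₀ hn₀]

/-- `(UAdm, uDist)` is complete: every Cauchy sequence of uniform admissible
subsets has a limit. -/
theorem uAdm_complete {D : Type*}
    [OmegaCompletePartialOrder D] [OrderBot D] (π : ℕ → D → D)
    (hmono : ∀ n, Monotone (π n))
    (hcont : ∀ (n : ℕ) (c : Chain D), π n (ωSup c) = ωSup (c.map ⟨π n, hmono n⟩))
    (hcomp : ∀ (n m : ℕ) (x : D), π n (π m x) = π (min n m) x)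
    (hbot : ∀ x : D, π 0 x = ⊥)
    (hsup : ∀ (c : Chain D) (x : D), (∀ n, c n = π n x) → ωSup c = x)
    (hfin : ∀ n, (Set.range (π n)).Finite) :
    ∀ F : ℕ → Set D, (∀ k, UniformAdmissible π (F k)) →
      (∀ ε : ℝ, 0 < ε → ∃ N, ∀ m ≥ N, ∀ n ≥ N, uDist π (F m) (F n) < ε) →
      ∃ L : Set D, UniformAdmissible π L ∧
        ∀ ε : ℝ, 0 < ε → ∃ N, ∀ n ≥ N, uDist π (F n) L < ε :=
  uAdm_complete_general π hmono hcont hcomp hbot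
end

section
/- Suppose an operation ∘ on a complete ultrametric space W satisfies the fixed-point equation r ∘ r' = ι((λw. ι⁻¹(r)(r' ∘ w)) * ι⁻¹(r')), where ι : (1/2)·(W → UAdm) ≅ W is an isometric isomorphism, * is a non-expansive binary operation, and emp = ι(λw.E) for E a unit of *. Then emp is a two-sided unit for ∘ (i.e., emp ∘ r = r and r ∘ emp = r for all r ∈ W). -/
/-- `emp` is a two-sided unit for the operation `∘` defined by the fixed-point
equation `r ∘ r' = ι((λw. ι⁻¹(r)(r' ∘ w)) * ι⁻¹(r'))`, where
`ι : (1/2)·(W → UAdm) ≅ W` and `*` has unit `E`, with `emp = ι(λw.E)`. -/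
theorem emp_unit_for_comp {W U : Type*} [MetricSpace W] [MetricSpace U]
    (iota : (W → U) → W) (invIota : W → W → U)
    (hinv1 : ∀ r : W, iota (invIota r) = r)
    (hinv2 : ∀ f : W → U, (∀ x y : W, dist (f x) (f y) ≤ dist x y) →
      invIota (iota f) = f)
    (hiso : ∀ f g : W → U, (∀ x y : W, dist (f x) (f y) ≤ dist x y) →
      (∀ x y : W, dist (g x) (g y) ≤ dist x y) →
      ∀ w : W, dist (f w) (g w) ≤ 2 * dist (iota f) (iota g))
    (star : U → U → U) (E : U)
    (hstarne : ∀ u u' v v' : U,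
      dist (star u v) (star u' v') ≤ max (dist u u') (dist v v'))
    (hEl : ∀ u : U, star E u = u) (hEr : ∀ u : U, star u E = u)
    (comp : W → W → W)
    (hfix : ∀ r r' : W,
      comp r r' = iota (fun w => star (invIota r (comp r' w)) (invIota r' w))) :
    (∀ r : W, comp (iota (fun _ => E)) r = r) ∧
    (∀ r : W, comp r (iota (fun _ => E)) = r) := by
  have hconst : invIota (iota (fun _ => E)) = fun _ => E := by
    apply hinv2
    intro x y
    simp [dist_nonneg]
  have hleft : ∀ r : W, comp (iota (fun _ => E)) r = r := by
    intro r
    rw [hfix, hconst]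
    simp only [hEl]
    exact hinv1 r
  refine ⟨hleft, fun r => ?_⟩
  rw [hfix]
  have : (fun w => star (invIota r (comp (iota (fun _ => E)) w))
      (invIota (iota (fun _ => E)) w)) = invIota r := by
    funext w
    rw [hleft w, hconst, hEr]
  rw [this, hinv1]
end

section
/- In the setting of the previous statement, the operation ∘ on W is associative. More precisely, prove by induction on n that for all n ∈ ℕ and all r, s, t ∈ W, d((r∘s)∘t, r∘(s∘t)) ≤ 2^{-n}, hence (r∘s)∘t = r∘(s∘t). -/
/-- The fixed-point operation `∘` on recursive worlds is associative; this is proved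
by showing, by induction on `n`, that `d((r∘s)∘t, r∘(s∘t)) ≤ 2^{-n}` for all `n`. -/
theorem comp_assoc_by_induction {W U : Type*} [MetricSpace W] [MetricSpace U]
    (iota : (W → U) → W) (invIota : W → W → U)
    (hinv1 : ∀ r : W, iota (invIota r) = r)
    (hinv2 : ∀ f : W → U, (∀ x y : W, dist (f x) (f y) ≤ dist x y) →
      invIota (iota f) = f)
    (hbW : ∀ x y : W, dist x y ≤ 1)
    (hscale : ∀ (f g : W → U) (n : ℕ),
      dist (iota f) (iota g) ≤ (2 : ℝ) ^ (-((n : ℤ) + 1)) ↔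
        ∀ w : W, dist (f w) (g w) ≤ (2 : ℝ) ^ (-(n : ℤ)))
    (star : U → U → U)
    (hstarne : ∀ u u' v v' : U,
      dist (star u v) (star u' v') ≤ max (dist u u') (dist v v'))
    (hstarassoc : ∀ u v t : U, star (star u v) t = star u (star v t))
    (hinvne : ∀ (r : W) (w w' : W), dist (invIota r w) (invIota r w') ≤ dist w w')
    (comp : W → W → W)
    (hfix : ∀ r r' : W,
      comp r r' = iota (fun w => star (invIota r (comp r' w)) (invIota r' w))) :
    (∀ (n : ℕ) (r s t : W),
      dist (comp (comp r s) t) (comp r (comp s t)) ≤ (2 : ℝ) ^ (-(n : ℤ))) ∧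
    (∀ r s t : W, comp (comp r s) t = comp r (comp s t)) := by
  have htend : Filter.Tendsto (fun n : ℕ => (2 : ℝ) ^ (-(n : ℤ))) Filter.atTop (nhds 0) := by
    have h2 : Filter.Tendsto (fun n : ℕ => ((2 : ℝ)⁻¹) ^ n) Filter.atTop (nhds 0) :=
      tendsto_pow_atTop_nhds_zero_of_lt_one (by norm_num) (by norm_num)
    refine h2.congr (fun n => ?_)
    rw [zpow_neg, zpow_natCast, inv_pow]
  -- If two elements of W are at distance ≤ 2^{-n} for all n, they are equal.
  have hzero : ∀ x y : W, (∀ n : ℕ, dist x y ≤ (2 : ℝ) ^ (-(n : ℤ))) → x = y := by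
    intro x y h
    have h0 : dist x y ≤ 0 := ge_of_tendsto' htend h
    exact eq_of_dist_eq_zero (le_antisymm h0 dist_nonneg)
  -- From iota f = iota g, deduce f = g pointwise.
  have hiotainj : ∀ f g : W → U, iota f = iota g → ∀ w, f w = g w := by
    intro f g hfg w
    have h : ∀ n : ℕ, dist (f w) (g w) ≤ (2 : ℝ) ^ (-(n : ℤ)) := by
      intro n
      have := (hscale f g n).mp (by rw [hfg, dist_self]; positivity)
      exact this w
    have h0 : dist (f w) (g w) ≤ 0 := ge_of_tendsto' htend h
    exact eq_of_dist_eq_zero (le_antisymm h0 dist_nonneg)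
  -- Key computation of invIota (comp r s).
  have hC : ∀ r s x : W,
      invIota (comp r s) x = star (invIota r (comp s x)) (invIota s x) := by
    intro r s x
    have h1 : iota (invIota (comp r s)) =
        iota (fun w => star (invIota r (comp s w)) (invIota s w)) := by
      rw [hinv1, hfix]
    exact hiotainj _ _ h1 x
  have main : ∀ (n : ℕ) (r s t : W),
      dist (comp (comp r s) t) (comp r (comp s t)) ≤ (2 : ℝ) ^ (-(n : ℤ)) := by
    intro n
    induction n with
    | zero => intro r s t; simpa using hbW _ _
    | succ n ih =>
      intro r s t
      have hpow : ((2 : ℝ)) ^ (-((n + 1 : ℕ) : ℤ)) = (2 : ℝ) ^ (-((n : ℤ) + 1)) := by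
        push_cast; ring_nf
      rw [hpow, hfix (comp r s) t, hfix r (comp s t), hscale]
      intro w
      have e1 : invIota (comp r s) (comp t w)
          = star (invIota r (comp s (comp t w))) (invIota s (comp t w)) := hC r s _
      have e2 : invIota (comp s t) w
          = star (invIota s (comp t w)) (invIota t w) := hC s t w
      rw [e1, e2, hstarassoc]
      calc dist (star (invIota r (comp s (comp t w)))
              (star (invIota s (comp t w)) (invIota t w)))
            (star (invIota r (comp (comp s t) w))
              (star (invIota s (comp t w)) (invIota t w)))
          ≤ max (dist (invIota r (comp s (comp t w))) (invIota r (comp (comp s t) w)))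
              (dist (star (invIota s (comp t w)) (invIota t w))
                (star (invIota s (comp t w)) (invIota t w))) := hstarne _ _ _ _
        _ ≤ max (dist (comp s (comp t w)) (comp (comp s t) w)) 0 := by
            rw [dist_self]
            exact max_le_max (hinvne _ _ _) le_rfl
        _ ≤ (2 : ℝ) ^ (-(n : ℤ)) := by
            rw [max_le_iff]
            refine ⟨?_, by positivity⟩
            rw [dist_comm]
            exact ih s t w
  refine ⟨main, fun r s t => hzero _ _ (fun n => main n r s t)⟩
end

section
/- In a logic whose specification judgements are closed under the rules (i) from ⊢ P infer ⊢ P ⊗ R for all R (⊗-Frame), (ii) skip satisfies {P} skip {P} for all P including {false} skip {false}, (iii) triples distribute over ⊗ via {P}e{Q} ⊗ R ⇔ {P∘R}e{Q∘R} with P∘R = (P⊗R)*R, true*false ⇔ false and false*false ⇔ false, and a consequence rule: if additionally double-negation elimination (¬¬φ ⇒ φ) is admitted at the level of specifications, then the invalid triple {true} skip {false} becomes derivable. -/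
/-- In a logic with the ⊗-frame rule, the skip axiom, the distribution axioms for ⊗
(over implication, triples, `true` and `false`), the `*`-equivalences
`true*false ⇔ false` and `false*false ⇔ false`, consequence, modus ponens and
negation introduction, adding double-negation elimination makes the invalid triple
`{true} skip {false}` derivable. -/
theorem classical_logic_derives_bad_triple {Assn : Type*}
    (Prov : Assn → Prop)
    (imp : Assn → Assn → Assn) (false_ true_ : Assn)
    (star otimes : Assn → Assn → Assn)
    (tr : Assn → Assn → Assn)  -- `tr P Q` is the triple `{P} skip {Q}`
    -- (i) ⊗-Frame rule
    (hframe : ∀ P R : Assn, Prov P → Prov (otimes P R))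
    -- (ii) Skip rule: `{P} skip {P}` for all `P`
    (hskip : ∀ P : Assn, Prov (tr P P))
    -- (iii) distribution axioms for ⊗ (as equivalences, stated as equalities)
    (himp_dist : ∀ P Q R : Assn, otimes (imp P Q) R = imp (otimes P R) (otimes Q R))
    (htr_dist : ∀ P Q R : Assn,
      otimes (tr P Q) R = tr (star (otimes P R) R) (star (otimes Q R) R))
    (hfalse_dist : ∀ R : Assn, otimes false_ R = false_)
    (htrue_dist : ∀ R : Assn, otimes true_ R = true_)
    -- `*`-equivalences
    (htrue_star_false : star true_ false_ = false_)
    (hfalse_star_false : star false_ false_ = false_)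
    -- consequence rule
    (hconseq : ∀ P P' Q Q' : Assn, Prov (imp P' P) → Prov (imp Q Q') →
      Prov (imp (tr P Q) (tr P' Q')))
    (hrefl : ∀ P : Assn, Prov (imp P P))
    -- modus ponens
    (hmp : ∀ P Q : Assn, Prov (imp P Q) → Prov P → Prov Q)
    -- negation introduction (deduction)
    (hnegintro : ∀ P : Assn, (Prov P → Prov false_) → Prov (imp P false_))
    -- double-negation elimination at the level of specifications
    (hdne : ∀ P : Assn, Prov (imp (imp P false_) false_) → Prov P) :
    Prov (tr true_ false_) := by
  apply hdne
  apply hnegintro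
  intro h
  have h2 := hframe _ false_ h
  rw [himp_dist, htr_dist, hfalse_dist, htrue_dist, htrue_star_false,
    hfalse_star_false] at h2
  exact hmp _ _ h2 (hskip false_)
end
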